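/- Let R(x) ∈ ℚ[[x]] satisfy R(0)=0 and R(x) = x exp(R(x)). Then for n ≥ 2, the coefficient of x^n in R(x)^2/(1−R(x))^2 equals (1/n!) · n! Σ_{k=0}^{n−2} n^k/k! = Σ_{k=0}^{n−2} n^k/k!; i.e., n! · [x^n] R(x)^2/(1−R(x))^2 = n! Σ_{k=0}^{n−2} n^k/k!. -/

import Mathlib

/-!
Substitution `f ↦ f(R)` is a ring homomorphism with
`[x^m] f(R) = Σ_{k ≤ m} [t^k] f · [x^m] R^k`.
For the tree function, strong induction on `n` (using `R^k = x^k (e^R)^k = x^k e^{kt}(R)` and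
`e^{kt} e^{mt} = e^{nt}`) gives the Lagrange inversion formula `[x^n] R^k = [t^{n-k}] (1-t) e^{nt}`,
hence `[x^n] f(R) = [t^n] f(t) (1-t) e^{nt}` for every `f`. Taking `f = t²/(1-t)²` leaves
`[t^n] t² e^{nt}/(1-t) = Σ_{k ≤ n-2} n^k/k!`.
-/

/-- Composition `Φ(R)` of formal power series, valid when `R` has zero constant term. -/
noncomputable def psComp {K : Type*} [CommRing K] (Φ R : PowerSeries K) : PowerSeries K :=
  PowerSeries.mk fun m => ∑ k ∈ Finset.range (m + 1),
    (PowerSeries.coeff k Φ) * PowerSeries.coeff m (R ^ k)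

open PowerSeries

section Subst

variable {K : Type*} [CommRing K] {R : PowerSeries K}

theorem PowerSeries.coeff_pow_eq_zero_of_lt (h0 : constantCoeff R = 0) {k m : ℕ} (hmk : m < k) :
    coeff m (R ^ k) = 0 := by
  obtain ⟨S, rfl⟩ := X_dvd_iff.mpr h0
  rw [mul_pow, coeff_X_pow_mul', if_neg (not_le.mpr hmk)]

theorem PowerSeries.coeff_subst_eq_sum_range (h0 : constantCoeff R = 0) (f : PowerSeries K)
    (m : ℕ) :
    coeff m (f.subst R) = ∑ k ∈ Finset.range (m + 1), coeff k f * coeff m (R ^ k) := by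
  rw [coeff_subst' (HasSubst.of_constantCoeff_zero' h0)]
  refine finsum_eq_sum_of_support_subset _ fun k hk => ?_
  rw [Finset.mem_coe, Finset.mem_range, Nat.lt_succ_iff]
  by_contra! hmk
  exact hk (by simp only [smul_eq_mul, coeff_pow_eq_zero_of_lt h0 hmk, mul_zero])

theorem psComp_eq_subst (h0 : constantCoeff R = 0) (Φ : PowerSeries K) :
    psComp Φ R = Φ.subst R := by
  ext m
  rw [psComp, coeff_mk, coeff_subst_eq_sum_range h0]

theorem PowerSeries.coeff_subst_eq_coeff_mul (h0 : constantCoeff R = 0) {m : ℕ}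
    {g : PowerSeries K} (hg : ∀ k ≤ m, coeff m (R ^ k) = coeff (m - k) g) (f : PowerSeries K) :
    coeff m (f.subst R) = coeff m (f * g) := by
  rw [coeff_subst_eq_sum_range h0, coeff_mul, Finset.Nat.sum_antidiagonal_eq_sum_range_succ_mk]
  exact Finset.sum_congr rfl fun k hk => by
    rw [hg k (Nat.lt_succ_iff.mp (Finset.mem_range.mp hk))]

theorem PowerSeries.coeff_mk_one_mul (f : PowerSeries K) (m : ℕ) :
    coeff m (mk 1 * f) = ∑ i ∈ Finset.range (m + 1), coeff i f := by
  rw [mul_comm, coeff_mul, Finset.Nat.sum_antidiagonal_eq_sum_range_succ_mk]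
  simp

end Subst

theorem PowerSeries.inv_one_sub_eq_subst_mk_one {k : Type*} [Field k] {R : PowerSeries k}
    (h0 : constantCoeff R = 0) : (1 - R)⁻¹ = (mk 1 : PowerSeries k).subst R := by
  have hsub := HasSubst.of_constantCoeff_zero' h0
  have h1 : (1 - X : PowerSeries k).subst R = 1 - R := by
    rw [← coe_substAlgHom hsub, map_sub, map_one, coe_substAlgHom, subst_X hsub]
  rw [inv_eq_iff_mul_eq_one (by simp [h0]), ← h1, ← subst_mul hsub, mk_one_mul_one_sub_eq_one,
    ← coe_substAlgHom hsub, map_one]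

section TreeFunction

variable {R : PowerSeries ℚ}

theorem coeff_one_sub_X_mul_rescale_exp_self (n : ℕ) :
    coeff n ((1 - X) * rescale (n : ℚ) (exp ℚ)) = if n = 0 then 1 else 0 := by
  cases n with
  | zero => simp
  | succ m =>
    rw [sub_mul, one_mul, map_sub, coeff_succ_X_mul, coeff_rescale, coeff_rescale, coeff_exp,
      coeff_exp, Algebra.algebraMap_self, RingHom.id_apply, RingHom.id_apply,
      if_neg m.succ_ne_zero, Nat.factorial_succ]
    field_simp
    push_cast
    ring

theorem coeff_pow_eq_of_eq_X_mul_subst_exp (h0 : constantCoeff R = 0)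
    (hR : R = X * (exp ℚ).subst R) (n : ℕ) :
    ∀ k ≤ n, coeff n (R ^ k) = coeff (n - k) ((1 - X) * rescale (n : ℚ) (exp ℚ)) := by
  induction n using Nat.strong_induction_on with
  | _ n ih =>
  rintro (_ | k) hk
  · rw [pow_zero, coeff_one, Nat.sub_zero, coeff_one_sub_X_mul_rescale_exp_self]
  obtain ⟨m, rfl⟩ := Nat.exists_eq_add_of_le' hk
  have hsub := HasSubst.of_constantCoeff_zero' h0
  calc coeff (m + (k + 1)) (R ^ (k + 1))
      = coeff m ((rescale ((k + 1 : ℕ) : ℚ) (exp ℚ)).subst R) := by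
        conv_lhs => rw [hR]
        rw [mul_pow, coeff_X_pow_mul, ← subst_pow hsub, exp_pow_eq_rescale_exp]
    _ = coeff m
          (rescale ((k + 1 : ℕ) : ℚ) (exp ℚ) * ((1 - X) * rescale (m : ℚ) (exp ℚ))) :=
        coeff_subst_eq_coeff_mul h0 (ih m (by omega)) _
    _ = coeff (m + (k + 1) - (k + 1))
          ((1 - X) * rescale ((m + (k + 1) : ℕ) : ℚ) (exp ℚ)) := by
        rw [mul_left_comm, exp_mul_exp_eq_exp_add, Nat.add_sub_cancel, add_comm (_ : ℚ)]
        push_cast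
        rfl

end TreeFunction

/-- For the tree function `R` (with `R(0)=0`, `R = x·exp(R)`) and `n ≥ 2`, the
coefficient of `x^n` in `R²/(1−R)²` equals `Σ_{k=0}^{n−2} n^k/k!`. -/
theorem coeff_R_sq_over_one_sub_R_sq (R : PowerSeries ℚ)
    (h0 : PowerSeries.constantCoeff R = 0)
    (hR : R = PowerSeries.X * psComp (PowerSeries.exp ℚ) R)
    (n : ℕ) (hn : 2 ≤ n) :
    PowerSeries.coeff n (R ^ 2 * ((1 - R)⁻¹) ^ 2) =
      ∑ k ∈ Finset.range (n - 1), (n : ℚ) ^ k / (k.factorial : ℚ) := by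
  have hsub := HasSubst.of_constantCoeff_zero' h0
  rw [psComp_eq_subst h0] at hR
  have hcomp : R ^ 2 * ((1 - R)⁻¹) ^ 2 = (X ^ 2 * mk 1 ^ 2 : PowerSeries ℚ).subst R := by
    rw [inv_one_sub_eq_subst_mk_one h0, subst_mul hsub, subst_pow hsub, subst_pow hsub,
      subst_X hsub]
  have hcancel :
      mk 1 ^ 2 * ((1 - X) * rescale (n : ℚ) (exp ℚ)) = mk 1 * rescale (n : ℚ) (exp ℚ) := by
    rw [sq, mul_assoc, ← mul_assoc (mk 1) (1 - X), mk_one_mul_one_sub_eq_one, one_mul]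
  obtain ⟨m, rfl⟩ := Nat.exists_eq_add_of_le' hn
  rw [hcomp, coeff_subst_eq_coeff_mul h0 (coeff_pow_eq_of_eq_X_mul_subst_exp h0 hR _),
    mul_assoc, hcancel, coeff_X_pow_mul, coeff_mk_one_mul, Nat.add_succ_sub_one]
  refine Finset.sum_congr rfl fun k _ => ?_
  rw [coeff_rescale, coeff_exp, Algebra.algebraMap_self, RingHom.id_apply, one_div, div_eq_mul_inv]
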